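/- Nonnegativity of the merchandising surplus via the Lagrangian angle subproblem (the claim z^o = −Γ₁^o ≤ 0 of Section 4.1). Let the primal variables (p_i, r_i^u, r_i^d, α_i^u, α_i^d, w_n^{sch}, w_n^{spi}, β_n, δ_n^0, δ_n, s_j, γ_j) be an optimal solution of the DCCO linear program and let (λ_n, ν_n, …) be an optimal solution of its linear programming dual (equivalently, the pair satisfies primal feasibility, dual feasibility and complementary slackness). Then: (a) the voltage-angle components (δ^0, δ) minimize the linear function g(θ^0, θ) := Σ_{n∈𝓑}[λ_n Σ_{(n,l)∈𝓛} B_{nl}(θ_n^0 − θ_l^0) − ν_n Σ_{(n,l)∈𝓛} B_{nl}(θ_n^0 − θ_n − θ_l^0 + θ_l)] over all pairs (θ^0, θ) ∈ ℝ^𝓑 × ℝ^𝓑 satisfying the line limits B_{kl}(θ_k^0 − θ_l^0) ≤ C̄_{kl} and B_{kl}(θ_k − θ_l) ≤ C̄_{kl} for all (k,l)∈𝓛; and (b) consequently g(δ^0, δ) ≤ 0 and Γ₁^o := Σ_{n∈𝓑} λ_n(Σ_{j∈𝓙_n} L_j − Σ_{i∈𝓘_n} p_i − w_n^{sch}) −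 Σ_{n∈𝓑} ν_n(Σ_{i∈𝓘_n}(r_i^u − r_i^d) + Σ_{j∈𝓙_n} s_j + W_n^f − w_n^{sch} − w_n^{spi}) = −g(δ^0, δ) ≥ 0. -/

import Mathlib

/-!
Dual stationarity in the angle variables says that, for each of the two angle vectors, the
edge weights `B_{kl} (λ_k - ν_k + η⁰_{kl})` and `B_{kl} (ν_k + η_{kl})` form circulations on the
network. A circulation is orthogonal to every potential difference, so the angle objective
collapses to `-∑ (η⁰ · flow(θ⁰) + η · flow(θ))` with nonnegative line-limit duals `η⁰, η`.
Over line-feasible angles this is at least `-∑ (η⁰ + η) C̄`, which complementary slackness makes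
its value at `(δ⁰, δ)`; comparing with the feasible point `(0, 0)` gives `g(δ⁰, δ) ≤ 0`, and the
balance equations identify the merchandising surplus with `-g(δ⁰, δ)`.
-/

open Finset

theorem Finset.sum_mul_sum_fiberwise {ι κ R : Type*} [Fintype κ] [DecidableEq κ]
    [CommSemiring R] (s : Finset ι) (π : ι → κ) (f : κ → R) (h : ι → R) :
    ∑ k, f k * ∑ i ∈ s with π i = k, h i = ∑ i ∈ s, f (π i) * h i := by
  rw [← sum_fiberwise s π fun i => f (π i) * h i]
  refine sum_congr rfl fun k _ => ?_
  rw [mul_sum]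
  exact sum_congr rfl fun i hi => by rw [(mem_filter.1 hi).2]

section Network

variable {V R : Type*} [CommRing R]

def lineFlow (B : V → V → R) (θ : V → R) (e : V × V) : R :=
  B e.1 e.2 * (θ e.1 - θ e.2)

theorem sum_mul_lineFlow_le_of_complementary [PartialOrder R] [IsOrderedRing R]
    {E : Finset (V × V)} {B : V → V → R} {Cap η : V × V → R} {δ θ : V → R}
    (hη : ∀ e ∈ E, 0 ≤ η e) (hcs : ∀ e ∈ E, η e * (Cap e - lineFlow B δ e) = 0)
    (hθ : ∀ e ∈ E, lineFlow B θ e ≤ Cap e) :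
    ∑ e ∈ E, η e * lineFlow B θ e ≤ ∑ e ∈ E, η e * lineFlow B δ e :=
  sum_le_sum fun e he => calc
    η e * lineFlow B θ e ≤ η e * Cap e := mul_le_mul_of_nonneg_left (hθ e he) (hη e he)
    _ = η e * lineFlow B δ e := by linear_combination hcs e he

variable [DecidableEq V]

def IsCirculation (E : Finset (V × V)) (c : V × V → R) : Prop :=
  ∀ n, ∑ e ∈ E with e.1 = n, c e = ∑ e ∈ E with e.2 = n, c e

theorem isCirculation_of_stationary {E : Finset (V × V)} {B : V → V → R} {a : V → R}
    {η : V × V → R}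
    (h : ∀ n, ∑ e ∈ E with e.1 = n, B e.1 e.2 * (a n + η e)
      - ∑ e ∈ E with e.2 = n, B e.1 e.2 * (a e.1 + η e) = 0) :
    IsCirculation E fun e => B e.1 e.2 * (a e.1 + η e) := fun n => by
  rw [← sub_eq_zero, ← h n]
  congr 1
  exact sum_congr rfl fun e he => by simp only [(mem_filter.1 he).2]

variable [Fintype V]

theorem IsCirculation.sum_mul_sub_eq_zero {E : Finset (V × V)} {c : V × V → R}
    (hc : IsCirculation E c) (θ : V → R) :
    ∑ e ∈ E, c e * (θ e.1 - θ e.2) = 0 := by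
  calc ∑ e ∈ E, c e * (θ e.1 - θ e.2)
      = ∑ e ∈ E, θ e.1 * c e - ∑ e ∈ E, θ e.2 * c e := by
        rw [← sum_sub_distrib]; exact sum_congr rfl fun e _ => by ring
    _ = ∑ n, θ n * (∑ e ∈ E with e.1 = n, c e - ∑ e ∈ E with e.2 = n, c e) := by
        simp only [mul_sub, sum_sub_distrib, sum_mul_sum_fiberwise]
    _ = 0 := sum_eq_zero fun n _ => by rw [hc n, sub_self, mul_zero]

theorem sum_mul_lineFlow_eq_neg_of_stationary {E : Finset (V × V)} {B : V → V → R}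
    {a : V → R} {η : V × V → R}
    (h : ∀ n, ∑ e ∈ E with e.1 = n, B e.1 e.2 * (a n + η e)
      - ∑ e ∈ E with e.2 = n, B e.1 e.2 * (a e.1 + η e) = 0) (θ : V → R) :
    ∑ e ∈ E, a e.1 * lineFlow B θ e = -∑ e ∈ E, η e * lineFlow B θ e := by
  rw [eq_neg_iff_add_eq_zero, ← sum_add_distrib,
    ← (isCirculation_of_stationary h).sum_mul_sub_eq_zero θ]
  exact sum_congr rfl fun e _ => by simp only [lineFlow]; ring

def angleObjective (E : Finset (V × V)) (B : V → V → R) (lam nu θ0 θ : V → R) : R :=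
  ∑ n, (lam n * ∑ e ∈ E with e.1 = n, B e.1 e.2 * (θ0 e.1 - θ0 e.2)
    - nu n * ∑ e ∈ E with e.1 = n, B e.1 e.2 * (θ0 e.1 - θ e.1 - θ0 e.2 + θ e.2))

theorem angleObjective_zero (E : Finset (V × V)) (B : V → V → R) (lam nu : V → R) :
    angleObjective E B lam nu 0 0 = 0 := by
  simp [angleObjective]

theorem angleObjective_eq_neg_sum {E : Finset (V × V)} {B : V → V → R} {lam nu : V → R}
    {η0 η : V × V → R}
    (h0 : ∀ n, ∑ e ∈ E with e.1 = n, B e.1 e.2 * (lam n - nu n + η0 e)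
      - ∑ e ∈ E with e.2 = n, B e.1 e.2 * (lam e.1 - nu e.1 + η0 e) = 0)
    (h1 : ∀ n, ∑ e ∈ E with e.1 = n, B e.1 e.2 * (nu n + η e)
      - ∑ e ∈ E with e.2 = n, B e.1 e.2 * (nu e.1 + η e) = 0) (θ0 θ : V → R) :
    angleObjective E B lam nu θ0 θ
      = -∑ e ∈ E, (η0 e * lineFlow B θ0 e + η e * lineFlow B θ e) := by
  have hsplit : ∀ n, ∑ e ∈ E with e.1 = n, B e.1 e.2 * (θ0 e.1 - θ e.1 - θ0 e.2 + θ e.2)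
      = ∑ e ∈ E with e.1 = n, lineFlow B θ0 e - ∑ e ∈ E with e.1 = n, lineFlow B θ e := by
    intro n
    rw [← sum_sub_distrib]
    exact sum_congr rfl fun e _ => by simp only [lineFlow]; ring
  calc angleObjective E B lam nu θ0 θ
      = ∑ n, ((lam n - nu n) * ∑ e ∈ E with e.1 = n, lineFlow B θ0 e
          + nu n * ∑ e ∈ E with e.1 = n, lineFlow B θ e) := by
        refine sum_congr rfl fun n _ => ?_
        change lam n * ∑ e ∈ E with e.1 = n, lineFlow B θ0 e - _ = _
        rw [hsplit n]
        ring
    _ = ∑ e ∈ E, (lam e.1 - nu e.1) * lineFlow B θ0 e + ∑ e ∈ E, nu e.1 * lineFlow B θ e := by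
        rw [sum_add_distrib, sum_mul_sum_fiberwise, sum_mul_sum_fiberwise]
    _ = -∑ e ∈ E, η0 e * lineFlow B θ0 e + -∑ e ∈ E, η e * lineFlow B θ e := by
        rw [sum_mul_lineFlow_eq_neg_of_stationary (a := fun n => lam n - nu n) h0,
          sum_mul_lineFlow_eq_neg_of_stationary h1]
    _ = _ := by rw [sum_add_distrib, neg_add]

theorem angleObjective_le_of_complementary [PartialOrder R] [IsOrderedRing R]
    {E : Finset (V × V)} {B : V → V → R} {Cap : V × V → R} {lam nu δ0 δ θ0 θ : V → R}
    {η0 η : V × V → R}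
    (h0 : ∀ n, ∑ e ∈ E with e.1 = n, B e.1 e.2 * (lam n - nu n + η0 e)
      - ∑ e ∈ E with e.2 = n, B e.1 e.2 * (lam e.1 - nu e.1 + η0 e) = 0)
    (h1 : ∀ n, ∑ e ∈ E with e.1 = n, B e.1 e.2 * (nu n + η e)
      - ∑ e ∈ E with e.2 = n, B e.1 e.2 * (nu e.1 + η e) = 0)
    (hη0 : ∀ e ∈ E, 0 ≤ η0 e) (hη : ∀ e ∈ E, 0 ≤ η e)
    (hcs0 : ∀ e ∈ E, η0 e * (Cap e - lineFlow B δ0 e) = 0)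
    (hcs : ∀ e ∈ E, η e * (Cap e - lineFlow B δ e) = 0)
    (hθ0 : ∀ e ∈ E, lineFlow B θ0 e ≤ Cap e) (hθ : ∀ e ∈ E, lineFlow B θ e ≤ Cap e) :
    angleObjective E B lam nu δ0 δ ≤ angleObjective E B lam nu θ0 θ := by
  rw [angleObjective_eq_neg_sum h0 h1, angleObjective_eq_neg_sum h0 h1, neg_le_neg_iff,
    sum_add_distrib, sum_add_distrib]
  exact add_le_add (sum_mul_lineFlow_le_of_complementary hη0 hcs0 hθ0)
    (sum_mul_lineFlow_le_of_complementary hη hcs hθ)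

end Network

theorem merchandising_surplus_nonneg_general
    {Bus Gen Load : Type*} [Fintype Bus] [Fintype Gen] [Fintype Load] [DecidableEq Bus]
    (bI : Gen → Bus) (bJ : Load → Bus)
    (Lines : Finset (Bus × Bus))
    (Bsus : Bus → Bus → ℝ) (Cap : Bus × Bus → ℝ) (hCap : ∀ e ∈ Lines, 0 ≤ Cap e)
    (Ld : Load → ℝ)
    (Wf : Bus → ℝ)
    -- primal variables
    (p ru rd : Gen → ℝ) (wsch wspi δ0 δ : Bus → ℝ) (s : Load → ℝ)
    -- dual variables
    (lam nu : Bus → ℝ)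
    (η0 η : Bus × Bus → ℝ)
    -- primal feasibility: scheduling-stage balance
    (hbal0 : ∀ n, (∑ i ∈ univ.filter (fun i => bI i = n), p i) + wsch n
        - (∑ e ∈ Lines.filter (fun e => e.1 = n), Bsus e.1 e.2 * (δ0 e.1 - δ0 e.2))
        = ∑ j ∈ univ.filter (fun j => bJ j = n), Ld j)
    -- primal feasibility: real-time balance
    (hbal1 : ∀ n, (∑ i ∈ univ.filter (fun i => bI i = n), (ru i - rd i))
        + (∑ j ∈ univ.filter (fun j => bJ j = n), s j)
        + (Wf n - wsch n - wspi n)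
        + (∑ e ∈ Lines.filter (fun e => e.1 = n),
            Bsus e.1 e.2 * (δ0 e.1 - δ e.1 - δ0 e.2 + δ e.2)) = 0)
    -- dual feasibility: nonnegativity of inequality duals
    (hη0 : ∀ e ∈ Lines, 0 ≤ η0 e) (hη : ∀ e ∈ Lines, 0 ≤ η e)
    -- dual feasibility: one dual constraint per primal variable
    (dfδ0 : ∀ n, (∑ e ∈ Lines.filter (fun e => e.1 = n),
          Bsus e.1 e.2 * (lam n - nu n + η0 e))
        - (∑ e ∈ Lines.filter (fun e => e.2 = n),
          Bsus e.1 e.2 * (lam e.1 - nu e.1 + η0 e)) = 0)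
    (dfδ : ∀ n, (∑ e ∈ Lines.filter (fun e => e.1 = n), Bsus e.1 e.2 * (nu n + η e))
        - (∑ e ∈ Lines.filter (fun e => e.2 = n), Bsus e.1 e.2 * (nu e.1 + η e)) = 0)
    -- complementary slackness: dual variable times primal slack
    (csη0 : ∀ e ∈ Lines, η0 e * (Cap e - Bsus e.1 e.2 * (δ0 e.1 - δ0 e.2)) = 0)
    (csη : ∀ e ∈ Lines, η e * (Cap e - Bsus e.1 e.2 * (δ e.1 - δ e.2)) = 0) :
    -- with g the objective of the Lagrangian angle subproblem:
    let g : (Bus → ℝ) → (Bus → ℝ) → ℝ := fun θ0 θ =>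
      ∑ n : Bus, (lam n * (∑ e ∈ Lines.filter (fun e => e.1 = n),
            Bsus e.1 e.2 * (θ0 e.1 - θ0 e.2))
        - nu n * (∑ e ∈ Lines.filter (fun e => e.1 = n),
            Bsus e.1 e.2 * (θ0 e.1 - θ e.1 - θ0 e.2 + θ e.2)))
    -- (a) the voltage angles (δ0, δ) minimize g over the line-feasible pairs
    (∀ θ0 θ : Bus → ℝ,
        (∀ e ∈ Lines, Bsus e.1 e.2 * (θ0 e.1 - θ0 e.2) ≤ Cap e) →
        (∀ e ∈ Lines, Bsus e.1 e.2 * (θ e.1 - θ e.2) ≤ Cap e) →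
        g δ0 δ ≤ g θ0 θ)
    -- (b) hence g(δ0, δ) ≤ 0 and the merchandising surplus Γ₁ = -g(δ0, δ) ≥ 0
    ∧ g δ0 δ ≤ 0
    ∧ ((∑ n : Bus, lam n * ((∑ j ∈ univ.filter (fun j => bJ j = n), Ld j)
            - (∑ i ∈ univ.filter (fun i => bI i = n), p i) - wsch n))
        - (∑ n : Bus, nu n * ((∑ i ∈ univ.filter (fun i => bI i = n), (ru i - rd i))
            + (∑ j ∈ univ.filter (fun j => bJ j = n), s j) + Wf n - wsch n - wspi n))
        = -g δ0 δ)
    ∧ 0 ≤ (∑ n : Bus, lam n * ((∑ j ∈ univ.filter (fun j => bJ j = n), Ld j)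
            - (∑ i ∈ univ.filter (fun i => bI i = n), p i) - wsch n))
        - (∑ n : Bus, nu n * ((∑ i ∈ univ.filter (fun i => bI i = n), (ru i - rd i))
            + (∑ j ∈ univ.filter (fun j => bJ j = n), s j) + Wf n - wsch n - wspi n)) := by
  intro g
  have hmin : ∀ θ0 θ : Bus → ℝ, (∀ e ∈ Lines, lineFlow Bsus θ0 e ≤ Cap e) →
      (∀ e ∈ Lines, lineFlow Bsus θ e ≤ Cap e) → g δ0 δ ≤ g θ0 θ :=
    fun _ _ hθ0 hθ => angleObjective_le_of_complementary dfδ0 dfδ hη0 hη csη0 csη hθ0 hθ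
  have hnonpos : g δ0 δ ≤ 0 := by
    have hzero : ∀ e ∈ Lines, lineFlow Bsus 0 e ≤ Cap e :=
      fun e he => by simpa [lineFlow] using hCap e he
    exact (hmin 0 0 hzero hzero).trans_eq (angleObjective_zero Lines Bsus lam nu)
  refine ⟨hmin, hnonpos, ?_⟩
  rw [and_iff_left_of_imp fun hsurplus => by rw [hsurplus]; exact neg_nonneg.2 hnonpos]
  simp only [g, ← sum_sub_distrib, ← sum_neg_distrib]
  exact sum_congr rfl fun n _ => by linear_combination (-lam n) * hbal0 n - nu n * hbal1 n

/-- Nonnegativity of the merchandising surplus via the Lagrangian angle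
subproblem (the claim `z^o = -Γ₁^o ≤ 0` of Section 4.1).  The hypotheses encode
an optimal primal-dual pair of the DCCO linear program via primal feasibility,
dual feasibility, and complementary slackness. -/
theorem merchandising_surplus_nonneg
    {Bus Gen Load : Type*} [Fintype Bus] [Fintype Gen] [Fintype Load] [DecidableEq Bus]
    (bI : Gen → Bus) (bJ : Load → Bus)
    (Lines : Finset (Bus × Bus))
    (Bsus : Bus → Bus → ℝ) (Cap : Bus × Bus → ℝ) (hCap : ∀ e ∈ Lines, 0 ≤ Cap e)
    (C Cu Cd : Gen → ℝ) (Cw : Bus → ℝ) (V : Load → ℝ)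
    (Ld : Load → ℝ) (hLd : ∀ j, 0 ≤ Ld j)
    (Pbar Rubar Rdbar : Gen → ℝ)
    (hPbar : ∀ i, 0 ≤ Pbar i) (hRubar : ∀ i, 0 ≤ Rubar i) (hRdbar : ∀ i, 0 ≤ Rdbar i)
    (Wf Wbar : Bus → ℝ) (hWf : ∀ n, 0 ≤ Wf n) (hWbar : ∀ n, 0 ≤ Wbar n)
    (σ : Bus → ℝ) (hσ : ∀ n, 0 < σ n) (q : ℝ) (hq : 0 < q)
    -- primal variables
    (p ru rd au ad : Gen → ℝ) (wsch wspi β δ0 δ : Bus → ℝ) (s γ : Load → ℝ)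
    -- dual variables
    (lam nu kap mu yspi xspi : Bus → ℝ)
    (ρ yu xu yd xd yy xx : Gen → ℝ) (ys xs : Load → ℝ)
    (η0 η : Bus × Bus → ℝ)
    -- primal feasibility: nonnegativity
    (hp : ∀ i, 0 ≤ p i) (hru : ∀ i, 0 ≤ ru i) (hrd : ∀ i, 0 ≤ rd i)
    (hau : ∀ i, 0 ≤ au i) (had : ∀ i, 0 ≤ ad i)
    (hwsch : ∀ n, 0 ≤ wsch n) (hwspi : ∀ n, 0 ≤ wspi n) (hβ : ∀ n, 0 ≤ β n)
    (hs : ∀ j, 0 ≤ s j) (hγ : ∀ j, 0 ≤ γ j)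
    -- primal feasibility: scheduling-stage balance
    (hbal0 : ∀ n, (∑ i ∈ univ.filter (fun i => bI i = n), p i) + wsch n
        - (∑ e ∈ Lines.filter (fun e => e.1 = n), Bsus e.1 e.2 * (δ0 e.1 - δ0 e.2))
        = ∑ j ∈ univ.filter (fun j => bJ j = n), Ld j)
    -- primal feasibility: real-time balance
    (hbal1 : ∀ n, (∑ i ∈ univ.filter (fun i => bI i = n), (ru i - rd i))
        + (∑ j ∈ univ.filter (fun j => bJ j = n), s j)
        + (Wf n - wsch n - wspi n)
        + (∑ e ∈ Lines.filter (fun e => e.1 = n),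
            Bsus e.1 e.2 * (δ0 e.1 - δ e.1 - δ0 e.2 + δ e.2)) = 0)
    -- primal feasibility: participation
    (hpart : ∀ n, (∑ i ∈ univ.filter (fun i => bI i = n), (au i + ad i))
        + (∑ j ∈ univ.filter (fun j => bJ j = n), γ j) + β n = 1)
    -- primal feasibility: line limits
    (hline0 : ∀ e ∈ Lines, Bsus e.1 e.2 * (δ0 e.1 - δ0 e.2) ≤ Cap e)
    (hline1 : ∀ e ∈ Lines, Bsus e.1 e.2 * (δ e.1 - δ e.2) ≤ Cap e)
    -- primal feasibility: bounds
    (hwschU : ∀ n, wsch n ≤ Wbar n)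
    (hpU : ∀ i, p i ≤ Pbar i)
    (hspiL : ∀ n, wspi n - β n * (q * σ n) ≥ 0)
    (hspiU : ∀ n, Wf n - wspi n - (1 - β n) * (q * σ n) ≥ 0)
    (hruL : ∀ i, ru i - au i * (q * σ (bI i)) ≥ 0)
    (hruU : ∀ i, Rubar i - ru i - au i * (q * σ (bI i)) ≥ 0)
    (hrdL : ∀ i, rd i - ad i * (q * σ (bI i)) ≥ 0)
    (hrdU : ∀ i, Rdbar i - rd i - ad i * (q * σ (bI i)) ≥ 0)
    (hcapL : ∀ i, p i + ru i - rd i - (au i + ad i) * (q * σ (bI i)) ≥ 0)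
    (hcapU : ∀ i, Pbar i - p i - ru i + rd i - (au i + ad i) * (q * σ (bI i)) ≥ 0)
    (hsL : ∀ j, s j - γ j * (q * σ (bJ j)) ≥ 0)
    (hsU : ∀ j, Ld j - s j - γ j * (q * σ (bJ j)) ≥ 0)
    -- dual feasibility: nonnegativity of inequality duals
    (hmu : ∀ n, 0 ≤ mu n) (hρ : ∀ i, 0 ≤ ρ i)
    (hyspi : ∀ n, 0 ≤ yspi n) (hxspi : ∀ n, 0 ≤ xspi n)
    (hyu : ∀ i, 0 ≤ yu i) (hxu : ∀ i, 0 ≤ xu i)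
    (hyd : ∀ i, 0 ≤ yd i) (hxd : ∀ i, 0 ≤ xd i)
    (hyy : ∀ i, 0 ≤ yy i) (hxx : ∀ i, 0 ≤ xx i)
    (hys : ∀ j, 0 ≤ ys j) (hxs : ∀ j, 0 ≤ xs j)
    (hη0 : ∀ e ∈ Lines, 0 ≤ η0 e) (hη : ∀ e ∈ Lines, 0 ≤ η e)
    -- dual feasibility: one dual constraint per primal variable
    (dfp : ∀ i, 0 ≤ C i - lam (bI i) + ρ i - yy i + xx i)
    (dfru : ∀ i, 0 ≤ Cu i - nu (bI i) - yu i + xu i - yy i + xx i)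
    (dfrd : ∀ i, 0 ≤ -Cd i + nu (bI i) - yd i + xd i + yy i - xx i)
    (dfau : ∀ i, 0 ≤ -kap (bI i) + (q * σ (bI i)) * (yu i + xu i + yy i + xx i))
    (dfad : ∀ i, 0 ≤ -kap (bI i) + (q * σ (bI i)) * (yd i + xd i + yy i + xx i))
    (dfwsch : ∀ n, 0 ≤ -lam n + nu n + mu n)
    (dfwspi : ∀ n, 0 ≤ -Cw n + nu n - yspi n + xspi n)
    (dfβ : ∀ n, 0 ≤ -kap n + (q * σ n) * (yspi n - xspi n))
    (dfs : ∀ j, 0 ≤ V j - nu (bJ j) - ys j + xs j)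
    (dfγ : ∀ j, 0 ≤ -kap (bJ j) + (q * σ (bJ j)) * (ys j + xs j))
    (dfδ0 : ∀ n, (∑ e ∈ Lines.filter (fun e => e.1 = n),
          Bsus e.1 e.2 * (lam n - nu n + η0 e))
        - (∑ e ∈ Lines.filter (fun e => e.2 = n),
          Bsus e.1 e.2 * (lam e.1 - nu e.1 + η0 e)) = 0)
    (dfδ : ∀ n, (∑ e ∈ Lines.filter (fun e => e.1 = n), Bsus e.1 e.2 * (nu n + η e))
        - (∑ e ∈ Lines.filter (fun e => e.2 = n), Bsus e.1 e.2 * (nu e.1 + η e)) = 0)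
    -- complementary slackness: dual variable times primal slack
    (csρ : ∀ i, ρ i * (Pbar i - p i) = 0)
    (csmu : ∀ n, mu n * (Wbar n - wsch n) = 0)
    (csyspi : ∀ n, yspi n * (wspi n - β n * (q * σ n)) = 0)
    (csxspi : ∀ n, xspi n * (Wf n - wspi n - (1 - β n) * (q * σ n)) = 0)
    (csyu : ∀ i, yu i * (ru i - au i * (q * σ (bI i))) = 0)
    (csxu : ∀ i, xu i * (Rubar i - ru i - au i * (q * σ (bI i))) = 0)
    (csyd : ∀ i, yd i * (rd i - ad i * (q * σ (bI i))) = 0)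
    (csxd : ∀ i, xd i * (Rdbar i - rd i - ad i * (q * σ (bI i))) = 0)
    (csyy : ∀ i, yy i * (p i + ru i - rd i - (au i + ad i) * (q * σ (bI i))) = 0)
    (csxx : ∀ i, xx i * (Pbar i - p i - ru i + rd i - (au i + ad i) * (q * σ (bI i))) = 0)
    (csys : ∀ j, ys j * (s j - γ j * (q * σ (bJ j))) = 0)
    (csxs : ∀ j, xs j * (Ld j - s j - γ j * (q * σ (bJ j))) = 0)
    (csη0 : ∀ e ∈ Lines, η0 e * (Cap e - Bsus e.1 e.2 * (δ0 e.1 - δ0 e.2)) = 0)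
    (csη : ∀ e ∈ Lines, η e * (Cap e - Bsus e.1 e.2 * (δ e.1 - δ e.2)) = 0)
    -- complementary slackness: primal variable times dual slack
    (dsp : ∀ i, p i * (C i - lam (bI i) + ρ i - yy i + xx i) = 0)
    (dsru : ∀ i, ru i * (Cu i - nu (bI i) - yu i + xu i - yy i + xx i) = 0)
    (dsrd : ∀ i, rd i * (-Cd i + nu (bI i) - yd i + xd i + yy i - xx i) = 0)
    (dsau : ∀ i, au i * (-kap (bI i) + (q * σ (bI i)) * (yu i + xu i + yy i + xx i)) = 0)
    (dsad : ∀ i, ad i * (-kap (bI i) + (q * σ (bI i)) * (yd i + xd i + yy i + xx i)) = 0)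
    (dswsch : ∀ n, wsch n * (-lam n + nu n + mu n) = 0)
    (dswspi : ∀ n, wspi n * (-Cw n + nu n - yspi n + xspi n) = 0)
    (dsβ : ∀ n, β n * (-kap n + (q * σ n) * (yspi n - xspi n)) = 0)
    (dss : ∀ j, s j * (V j - nu (bJ j) - ys j + xs j) = 0)
    (dsγ : ∀ j, γ j * (-kap (bJ j) + (q * σ (bJ j)) * (ys j + xs j)) = 0) :
    -- with g the objective of the Lagrangian angle subproblem:
    let g : (Bus → ℝ) → (Bus → ℝ) → ℝ := fun θ0 θ =>
      ∑ n : Bus, (lam n * (∑ e ∈ Lines.filter (fun e => e.1 = n),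
            Bsus e.1 e.2 * (θ0 e.1 - θ0 e.2))
        - nu n * (∑ e ∈ Lines.filter (fun e => e.1 = n),
            Bsus e.1 e.2 * (θ0 e.1 - θ e.1 - θ0 e.2 + θ e.2)))
    -- (a) the voltage angles (δ0, δ) minimize g over the line-feasible pairs
    (∀ θ0 θ : Bus → ℝ,
        (∀ e ∈ Lines, Bsus e.1 e.2 * (θ0 e.1 - θ0 e.2) ≤ Cap e) →
        (∀ e ∈ Lines, Bsus e.1 e.2 * (θ e.1 - θ e.2) ≤ Cap e) →
        g δ0 δ ≤ g θ0 θ)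
    -- (b) hence g(δ0, δ) ≤ 0 and the merchandising surplus Γ₁ = -g(δ0, δ) ≥ 0
    ∧ g δ0 δ ≤ 0
    ∧ ((∑ n : Bus, lam n * ((∑ j ∈ univ.filter (fun j => bJ j = n), Ld j)
            - (∑ i ∈ univ.filter (fun i => bI i = n), p i) - wsch n))
        - (∑ n : Bus, nu n * ((∑ i ∈ univ.filter (fun i => bI i = n), (ru i - rd i))
            + (∑ j ∈ univ.filter (fun j => bJ j = n), s j) + Wf n - wsch n - wspi n))
        = -g δ0 δ)
    ∧ 0 ≤ (∑ n : Bus, lam n * ((∑ j ∈ univ.filter (fun j => bJ j = n), Ld j)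
            - (∑ i ∈ univ.filter (fun i => bI i = n), p i) - wsch n))
        - (∑ n : Bus, nu n * ((∑ i ∈ univ.filter (fun i => bI i = n), (ru i - rd i))
            + (∑ j ∈ univ.filter (fun j => bJ j = n), s j) + Wf n - wsch n - wspi n)) :=
  merchandising_surplus_nonneg_general bI bJ Lines Bsus Cap hCap Ld Wf p ru rd wsch wspi δ0 δ s lam
    nu η0 η hbal0 hbal1 hη0 hη dfδ0 dfδ csη0 csη
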